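/- arXiv:2008.07461 — 6 statements merged into one kernel-verified Lean document; each statement's English description precedes it below -/
import Mathlib

section
/- Let E be a finite-dimensional real normed vector space, F a real normed vector space, z₀ ∈ E, and let g : ℝ × ℝ × E → F be a smooth (C^∞) map on a neighborhood of (0,0,z₀) such that g(0,s,z) does not depend on s. Define f(t,z) = g(t, t·log|t|, z) for t ≠ 0 and f(0,z) = g(0,0,z). Then f is of class C¹ on a neighborhood of (0,z₀) in ℝ × E, and for every z near z₀ its Fréchet derivative at (0,z) is the linear map (τ,ζ) ↦ τ·(∂g/∂t)(0,0,z) + D_z g(0,0,z)(ζ), where D_z g denotes the partial Fréchet derivative of g with respect to its E-variable. -/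
/-!
Write `f = g ∘ θ` with `θ (t, z) = (t, t log |t|, z)`. Off the hyperplane `t = 0` the chain rule
gives `Df = Dg(θ) ∘ (dt, (log |t| + 1) dt, dz)`, whose only singular part is
`(log |t| + 1) • ∂ₛg(θ)`. Since `∂ₛg` vanishes on `t = 0` and `Dg` is Lipschitz near `(0, 0, z₀)`,
`∂ₛg(θ (t, z)) = O(t)`, so that part tends to `0` because `t log |t| → 0`. Hence `Df` extends
continuously across `t = 0`, and a function that is continuous near a point of a hyperplane and
differentiable off it, with derivative converging there, is differentiable there with the limit
as derivative: apply the extension theorem for convex sets to each of the two half-boxes.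
-/

open Filter Metric Set Topology

theorem tendsto_log_add_one_smul_of_norm_le {α G : Type*} [NormedAddCommGroup G]
    [NormedSpace ℝ G] {l : Filter α} {t : α → ℝ} {a : α → G} {C : ℝ}
    (ht : Tendsto t l (𝓝 0)) (ha : ∀ᶠ x in l, ‖a x‖ ≤ C * |t x|) :
    Tendsto (fun x => (Real.log (t x) + 1) • a x) l (𝓝 0) := by
  have hbound : Tendsto (fun x => C * |t x * Real.log (t x) + t x|) l (𝓝 0) := by
    have := ((Real.continuous_mul_log.add continuous_id).tendsto 0).comp ht
    simpa using this.abs.const_mul C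
  refine squeeze_zero_norm' ?_ hbound
  filter_upwards [ha] with x hx
  calc ‖(Real.log (t x) + 1) • a x‖ = |Real.log (t x) + 1| * ‖a x‖ := by
        rw [norm_smul, Real.norm_eq_abs]
    _ ≤ |Real.log (t x) + 1| * (C * |t x|) := by gcongr
    _ = C * |t x * Real.log (t x) + t x| := by
        rw [mul_left_comm, ← abs_mul]; ring_nf

theorem exists_ball_lipschitzOnWith_fderiv {G H : Type*} [NormedAddCommGroup G]
    [NormedSpace ℝ G] [NormedAddCommGroup H] [NormedSpace ℝ H] {g : G → H} {U : Set G} {x : G}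
    (hU : IsOpen U) (hx : x ∈ U) (hg : ContDiffOn ℝ 2 g U) :
    ∃ ε > 0, ball x ε ⊆ U ∧ ∃ K, LipschitzOnWith K (fderiv ℝ g) (ball x ε) := by
  obtain ⟨K, W, hW, hlip⟩ :=
    ((hg.fderiv_of_isOpen hU le_rfl).contDiffAt (hU.mem_nhds hx)).exists_lipschitzOnWith
  obtain ⟨ε, hε, hball⟩ := Metric.mem_nhds_iff.1 (inter_mem hW (hU.mem_nhds hx))
  exact ⟨ε, hε, hball.trans inter_subset_right, K, hlip.mono (hball.trans inter_subset_left)⟩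

/-- `Real.log t` is `log |t|`, so this is the map `(t, z) ↦ (t, t log |t|, z)`. -/
noncomputable def mulLogLift {E : Type*} (p : ℝ × E) : ℝ × ℝ × E :=
  (p.1, p.1 * Real.log p.1, p.2)

theorem continuous_mulLogLift {E : Type*} [TopologicalSpace E] :
    Continuous (mulLogLift (E := E)) :=
  continuous_fst.prodMk ((Real.continuous_mul_log.comp continuous_fst).prodMk continuous_snd)

section

variable {E F : Type*} [NormedAddCommGroup E] [NormedSpace ℝ E]
  [NormedAddCommGroup F] [NormedSpace ℝ F]
  {g : ℝ × ℝ × E → F} {B : Set (ℝ × ℝ × E)} {K : NNReal}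

theorem hasFDerivAt_of_tendsto_fderiv_of_fst_ne_zero {f : ℝ × E → F} {z : E}
    {L : ℝ × E →L[ℝ] F} (hcont : ∀ᶠ q in 𝓝 ((0 : ℝ), z), ContinuousAt f q)
    (hdiff : ∀ᶠ q in 𝓝 ((0 : ℝ), z), q.1 ≠ 0 → DifferentiableAt ℝ f q)
    (hlim : Tendsto (fderiv ℝ f) (𝓝[{q | q.1 ≠ 0}] ((0 : ℝ), z)) (𝓝 L)) :
    HasFDerivAt f L ((0 : ℝ), z) := by
  obtain ⟨r, hr, hr_good⟩ := nhds_basis_closedBall.eventually_iff.1 (hcont.and hdiff)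
  have half : ∀ I ⊆ Icc (-r) r, IsOpen I → Convex ℝ I → (0 : ℝ) ∉ I →
      HasFDerivWithinAt f L (closure I ×ˢ closedBall z r) ((0 : ℝ), z) := by
    intro I hIr hIo hIc hI0
    have hclosure : closure I ×ˢ closedBall z r ⊆ closedBall ((0 : ℝ), z) r := by
      rw [← closedBall_prod_same, Real.closedBall_eq_Icc, zero_sub, zero_add]
      exact prod_mono (closure_minimal hIr isClosed_Icc) le_rfl
    rw [← closure_ball z hr.ne', ← closure_prod_eq]
    refine hasFDerivWithinAt_closure_of_tendsto_fderiv ?_ (hIc.prod (convex_ball z r))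
      (hIo.prod isOpen_ball) ?_ (hlim.mono_left (nhdsWithin_mono _ ?_))
    · intro q hq
      exact ((hr_good (hclosure (prod_mono subset_closure ball_subset_closedBall hq))).2
        (ne_of_mem_of_not_mem hq.1 hI0)).differentiableWithinAt
    · intro q hq
      rw [closure_prod_eq, closure_ball z hr.ne'] at hq
      exact (hr_good (hclosure hq)).1.continuousWithinAt
    · exact fun q hq => ne_of_mem_of_not_mem hq.1 hI0
  have hpos := half (Ioo 0 r) (Ioo_subset_Icc_self.trans (Icc_subset_Icc (by linarith) le_rfl))
    isOpen_Ioo (convex_Ioo 0 r) (lt_irrefl 0 ·.1)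
  have hneg := half (Ioo (-r) 0) (Ioo_subset_Icc_self.trans (Icc_subset_Icc le_rfl hr.le))
    isOpen_Ioo (convex_Ioo (-r) 0) (lt_irrefl 0 ·.2)
  rw [closure_Ioo hr.ne] at hpos
  rw [closure_Ioo (by linarith)] at hneg
  refine (hpos.union hneg).hasFDerivAt (mem_of_superset (ball_mem_nhds _ hr) ?_)
  rw [← ball_prod_same, ← union_prod]
  refine prod_mono (fun t ht => ?_) ball_subset_closedBall
  rw [Real.ball_eq_Ioo, zero_sub, zero_add] at ht
  rcases le_total 0 t with h | h
  · exact Or.inl ⟨h, ht.2.le⟩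
  · exact Or.inr ⟨ht.1.le, h⟩

theorem fderiv_apply_eq_deriv_add_fderiv {t s : ℝ} {z : E}
    (hg : DifferentiableAt ℝ g (t, s, z)) (τ : ℝ) (ζ : E) :
    fderiv ℝ g (t, s, z) (τ, 0, ζ)
      = τ • deriv (fun t' : ℝ => g (t', s, z)) t + fderiv ℝ (fun w : E => g (t, s, w)) z ζ := by
  have ht : HasDerivAt (fun t' : ℝ => g (t', s, z)) (fderiv ℝ g (t, s, z) (1, 0, 0)) t :=
    hg.hasFDerivAt.comp_hasDerivAt t ((hasDerivAt_id t).prodMk (hasDerivAt_const t (s, z)))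
  have hz : HasFDerivAt (fun w : E => g (t, s, w))
      ((fderiv ℝ g (t, s, z)).comp ((0 : E →L[ℝ] ℝ).prod ((0 : E →L[ℝ] ℝ).prod (.id ℝ E)))) z :=
    hg.hasFDerivAt.comp z ((hasFDerivAt_const t z).prodMk
      ((hasFDerivAt_const s z).prodMk (hasFDerivAt_id z)))
  rw [ht.deriv, hz.fderiv, ContinuousLinearMap.comp_apply, ← map_smul, ← map_add]
  simp

theorem fderiv_apply_snd_eq_zero_of_const {s : ℝ} {z : E}
    (hindep : ∀ s' : ℝ, g (0, s', z) = g (0, s, z)) (hg : DifferentiableAt ℝ g (0, s, z)) :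
    fderiv ℝ g (0, s, z) (0, 1, 0) = 0 := by
  have hcurve : HasDerivAt (fun s' : ℝ => g (0, s', z)) (fderiv ℝ g (0, s, z) (0, 1, 0)) s :=
    hg.hasFDerivAt.comp_hasDerivAt s
      ((hasDerivAt_const s 0).prodMk ((hasDerivAt_id s).prodMk (hasDerivAt_const s z)))
  rw [funext hindep] at hcurve
  exact hcurve.unique (hasDerivAt_const s _)

theorem norm_fderiv_apply_snd_le (hlip : LipschitzOnWith K (fderiv ℝ g) B) {t s : ℝ} {z : E}
    (hindep : ∀ s' : ℝ, g (0, s', z) = g (0, s, z)) (hg : DifferentiableAt ℝ g (0, s, z))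
    (ht : (t, s, z) ∈ B) (h0 : ((0 : ℝ), s, z) ∈ B) :
    ‖fderiv ℝ g (t, s, z) (0, 1, 0)‖ ≤ K * |t| := by
  calc ‖fderiv ℝ g (t, s, z) (0, 1, 0)‖
      = ‖(fderiv ℝ g (t, s, z) - fderiv ℝ g (0, s, z)) (0, 1, 0)‖ := by
        rw [sub_apply, fderiv_apply_snd_eq_zero_of_const hindep hg, sub_zero]
    _ ≤ ‖fderiv ℝ g (t, s, z) - fderiv ℝ g (0, s, z)‖ * ‖((0 : ℝ), (1 : ℝ), (0 : E))‖ :=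
        ContinuousLinearMap.le_opNorm _ _
    _ ≤ K * ‖((t, s, z) : ℝ × ℝ × E) - (0, s, z)‖ * 1 := by
        gcongr
        · exact hlip.norm_sub_le ht h0
        · simp
    _ = K * |t| := by simp

theorem hasFDerivAt_mulLogLift {p : ℝ × E} (hp : p.1 ≠ 0) :
    HasFDerivAt mulLogLift ((ContinuousLinearMap.fst ℝ ℝ E).prod
      (((Real.log p.1 + 1) • ContinuousLinearMap.fst ℝ ℝ E).prod
        (ContinuousLinearMap.snd ℝ ℝ E))) p :=
  hasFDerivAt_fst.prodMk
    (((Real.hasDerivAt_mul_log hp).comp_hasFDerivAt p hasFDerivAt_fst).prodMk hasFDerivAt_snd)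

/-- The chain-rule derivative of `g ∘ mulLogLift` off `t = 0`, with the `log |t|`-singular
`s`-direction term split off. -/
noncomputable def fderivCompMulLogLift (g : ℝ × ℝ × E → F) (p : ℝ × E) : ℝ × E →L[ℝ] F :=
  (fderiv ℝ g (mulLogLift p)).comp ((ContinuousLinearMap.fst ℝ ℝ E).prod
      ((ContinuousLinearMap.inr ℝ ℝ E).comp (ContinuousLinearMap.snd ℝ ℝ E)))
    + (ContinuousLinearMap.fst ℝ ℝ E).smulRight
      ((Real.log p.1 + 1) • fderiv ℝ g (mulLogLift p) (0, 1, 0))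

theorem hasFDerivAt_comp_mulLogLift_of_fst_ne_zero {p : ℝ × E}
    (hg : DifferentiableAt ℝ g (mulLogLift p)) (hp : p.1 ≠ 0) :
    HasFDerivAt (g ∘ mulLogLift) (fderivCompMulLogLift g p) p := by
  refine (hg.hasFDerivAt.comp p (hasFDerivAt_mulLogLift hp)).congr_fderiv
    (ContinuousLinearMap.ext fun v => ?_)
  simp only [fderivCompMulLogLift, ContinuousLinearMap.comp_apply, add_apply,
    ContinuousLinearMap.smulRight_apply, ← map_smul, ← map_add]
  congr 1
  simp [mul_comm]

theorem continuousOn_fderivCompMulLogLift (hB : IsOpen B) (hdiff : DifferentiableOn ℝ g B)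
    (hlip : LipschitzOnWith K (fderiv ℝ g) B)
    (hB0 : ∀ t s z, (t, s, z) ∈ B → ((0 : ℝ), s, z) ∈ B)
    (hindep : ∀ s s' : ℝ, ∀ z : E, g (0, s, z) = g (0, s', z)) :
    ContinuousOn (fderivCompMulLogLift g) (mulLogLift ⁻¹' B) := by
  have hDg : ContinuousOn (fun p => fderiv ℝ g (mulLogLift p)) (mulLogLift ⁻¹' B) :=
    hlip.continuousOn.comp continuous_mulLogLift.continuousOn (mapsTo_preimage _ _)
  have hsing : ContinuousOn (fun p : ℝ × E => (Real.log p.1 + 1) •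
      fderiv ℝ g (mulLogLift p) (0, 1, 0)) (mulLogLift ⁻¹' B) := by
    rintro ⟨t, z⟩ hp
    rcases eq_or_ne t 0 with rfl | ht
    · have hzero : fderiv ℝ g (mulLogLift ((0 : ℝ), z)) (0, 1, 0) = 0 := by
        have h0 : ((0 : ℝ), (0 : ℝ), z) ∈ B := by simpa [mulLogLift] using hp
        simpa [mulLogLift] using fderiv_apply_snd_eq_zero_of_const (fun s' => hindep s' 0 z)
          (hdiff.differentiableAt (hB.mem_nhds h0))
      rw [ContinuousWithinAt, hzero, smul_zero]
      refine tendsto_log_add_one_smul_of_norm_le (C := K)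
        (continuous_fst.continuousWithinAt.tendsto.trans_eq rfl) ?_
      filter_upwards [self_mem_nhdsWithin] with q hq
      exact norm_fderiv_apply_snd_le hlip (fun s' => hindep s' _ q.2)
        (hdiff.differentiableAt (hB.mem_nhds (hB0 _ _ _ hq))) hq (hB0 _ _ _ hq)
    · exact ((((Real.continuousAt_log ht).comp continuousAt_fst).add continuousAt_const).smul
        ((hDg.continuousAt ((hB.preimage continuous_mulLogLift).mem_nhds hp)).clm_apply
          continuousAt_const)).continuousWithinAt
  exact (hDg.clm_comp continuousOn_const).add
    ((ContinuousLinearMap.smulRightL ℝ (ℝ × E) F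
      (ContinuousLinearMap.fst ℝ ℝ E)).continuous.comp_continuousOn hsing)

theorem fderivCompMulLogLift_zero_apply {z : E}
    (hindep : ∀ s s' : ℝ, ∀ z : E, g (0, s, z) = g (0, s', z))
    (hg : DifferentiableAt ℝ g (0, 0, z)) (τ : ℝ) (ζ : E) :
    fderivCompMulLogLift g (0, z) (τ, ζ)
      = τ • deriv (fun t : ℝ => g (t, 0, z)) 0 + fderiv ℝ (fun w : E => g (0, 0, w)) z ζ := by
  have hzero := fderiv_apply_snd_eq_zero_of_const (fun s' => hindep s' 0 z) hg
  simp [fderivCompMulLogLift, mulLogLift, hzero, fderiv_apply_eq_deriv_add_fderiv hg]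

theorem hasFDerivAt_comp_mulLogLift (hB : IsOpen B) (hdiff : DifferentiableOn ℝ g B)
    (hlip : LipschitzOnWith K (fderiv ℝ g) B)
    (hB0 : ∀ t s z, (t, s, z) ∈ B → ((0 : ℝ), s, z) ∈ B)
    (hindep : ∀ s s' : ℝ, ∀ z : E, g (0, s, z) = g (0, s', z))
    {p : ℝ × E} (hp : p ∈ mulLogLift ⁻¹' B) :
    HasFDerivAt (g ∘ mulLogLift) (fderivCompMulLogLift g p) p := by
  have hV : IsOpen (mulLogLift ⁻¹' B) := hB.preimage continuous_mulLogLift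
  have hoff : ∀ q ∈ mulLogLift ⁻¹' B, q.1 ≠ 0 →
      HasFDerivAt (g ∘ mulLogLift) (fderivCompMulLogLift g q) q := fun q hq =>
    hasFDerivAt_comp_mulLogLift_of_fst_ne_zero (hdiff.differentiableAt (hB.mem_nhds hq))
  obtain ⟨t, z⟩ := p
  rcases eq_or_ne t 0 with rfl | ht
  · have hL := continuousOn_fderivCompMulLogLift hB hdiff hlip hB0 hindep
    refine hasFDerivAt_of_tendsto_fderiv_of_fst_ne_zero ?_ ?_ ?_
    · filter_upwards [hV.mem_nhds hp] with q hq
      exact (hdiff.differentiableAt (hB.mem_nhds hq)).continuousAt.comp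
        continuous_mulLogLift.continuousAt
    · filter_upwards [hV.mem_nhds hp] with q hq hq1
      exact (hoff q hq hq1).differentiableAt
    · refine ((hL.continuousAt (hV.mem_nhds hp)).tendsto.mono_left nhdsWithin_le_nhds).congr' ?_
      filter_upwards [nhdsWithin_le_nhds (hV.mem_nhds hp), self_mem_nhdsWithin] with q hq hq1
      exact (hoff q hq hq1).fderiv.symm
  · exact hoff _ hp ht

theorem contDiffOn_comp_mulLogLift (hB : IsOpen B) (hdiff : DifferentiableOn ℝ g B)
    (hlip : LipschitzOnWith K (fderiv ℝ g) B)
    (hB0 : ∀ t s z, (t, s, z) ∈ B → ((0 : ℝ), s, z) ∈ B)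
    (hindep : ∀ s s' : ℝ, ∀ z : E, g (0, s, z) = g (0, s', z)) :
    ContDiffOn ℝ 1 (g ∘ mulLogLift) (mulLogLift ⁻¹' B) := by
  have hder := fun p (hp : p ∈ mulLogLift ⁻¹' B) =>
    hasFDerivAt_comp_mulLogLift hB hdiff hlip hB0 hindep hp
  rw [show (1 : WithTop ℕ∞) = 0 + 1 from rfl,
    contDiffOn_succ_iff_fderiv_of_isOpen (hB.preimage continuous_mulLogLift), contDiffOn_zero]
  refine ⟨fun p hp => (hder p hp).differentiableAt.differentiableWithinAt, by simp, ?_⟩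
  exact (continuousOn_fderivCompMulLogLift hB hdiff hlip hB0 hindep).congr
    fun p hp => (hder p hp).fderiv

end

theorem stmt0_general
    {E F : Type*} [NormedAddCommGroup E] [NormedSpace ℝ E]
    [NormedAddCommGroup F] [NormedSpace ℝ F]
    (z₀ : E) (g : ℝ × ℝ × E → F)
    (U : Set (ℝ × ℝ × E)) (hU : IsOpen U) (hmem : ((0:ℝ), (0:ℝ), z₀) ∈ U)
    (hg : ContDiffOn ℝ (⊤ : ℕ∞) g U)
    (hindep : ∀ s s' : ℝ, ∀ z : E, g (0, s, z) = g (0, s', z))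
    (f : ℝ × E → F)
    (hf0 : ∀ z : E, f (0, z) = g (0, 0, z))
    (hf : ∀ t : ℝ, t ≠ 0 → ∀ z : E, f (t, z) = g (t, t * Real.log |t|, z)) :
    ∃ V : Set (ℝ × E), IsOpen V ∧ ((0:ℝ), z₀) ∈ V ∧ ContDiffOn ℝ 1 f V ∧
      ∀ z : E, ((0:ℝ), z) ∈ V →
        ∀ (τ : ℝ) (ζ : E),
          fderiv ℝ f (0, z) (τ, ζ)
            = τ • deriv (fun t : ℝ => g (t, 0, z)) 0
              + fderiv ℝ (fun w : E => g (0, 0, w)) z ζ := by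
  obtain ⟨ε, hε, hεU, K, hlip⟩ :=
    exists_ball_lipschitzOnWith_fderiv hU hmem (hg.of_le (WithTop.coe_le_coe.2 le_top))
  set B := ball ((0 : ℝ), (0 : ℝ), z₀) ε
  have hB0 : ∀ t s z, (t, s, z) ∈ B → ((0 : ℝ), s, z) ∈ B := by
    intro t s z h
    simp only [B, mem_ball, Prod.dist_eq, dist_self] at h ⊢
    exact lt_of_le_of_lt (max_le (by positivity) (le_max_right _ _)) h
  have hdiff : DifferentiableOn ℝ g B := (hg.differentiableOn (by simp)).mono hεU
  obtain rfl : f = g ∘ mulLogLift := by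
    ext ⟨t, z⟩
    rcases eq_or_ne t 0 with rfl | ht
    · simp [mulLogLift, hf0]
    · simp [mulLogLift, hf t ht, Real.log_abs]
  refine ⟨mulLogLift ⁻¹' B, isOpen_ball.preimage continuous_mulLogLift, by simpa [mulLogLift, B],
    contDiffOn_comp_mulLogLift isOpen_ball hdiff hlip hB0 hindep, fun z hz τ ζ => ?_⟩
  have hz' : ((0 : ℝ), (0 : ℝ), z) ∈ B := by
    simpa only [mem_preimage, mulLogLift, zero_mul] using hz
  rw [(hasFDerivAt_comp_mulLogLift isOpen_ball hdiff hlip hB0 hindep hz).fderiv]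
  exact fderivCompMulLogLift_zero_apply hindep
    (hdiff.differentiableAt (isOpen_ball.mem_nhds hz')) τ ζ

theorem stmt0
    {E F : Type*} [NormedAddCommGroup E] [NormedSpace ℝ E] [FiniteDimensional ℝ E]
    [NormedAddCommGroup F] [NormedSpace ℝ F]
    (z₀ : E) (g : ℝ × ℝ × E → F)
    (U : Set (ℝ × ℝ × E)) (hU : IsOpen U) (hmem : ((0:ℝ), (0:ℝ), z₀) ∈ U)
    (hg : ContDiffOn ℝ (⊤ : ℕ∞) g U)
    (hindep : ∀ s s' : ℝ, ∀ z : E, g (0, s, z) = g (0, s', z))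
    (f : ℝ × E → F)
    (hf0 : ∀ z : E, f (0, z) = g (0, 0, z))
    (hf : ∀ t : ℝ, t ≠ 0 → ∀ z : E, f (t, z) = g (t, t * Real.log |t|, z)) :
    ∃ V : Set (ℝ × E), IsOpen V ∧ ((0:ℝ), z₀) ∈ V ∧ ContDiffOn ℝ 1 f V ∧
      ∀ z : E, ((0:ℝ), z) ∈ V →
        ∀ (τ : ℝ) (ζ : E),
          fderiv ℝ f (0, z) (τ, ζ)
            = τ • deriv (fun t : ℝ => g (t, 0, z)) 0
              + fderiv ℝ (fun w : E => g (0, 0, w)) z ζ :=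
  stmt0_general z₀ g U hU hmem hg hindep f hf0 hf
end

section
/- Let Ω = ℂ ∖ (−∞,0] be the slit plane and fix λ ∈ ℂ∖{0}. Define Φ^S : Ω → M₂(ℂ) by Φ^S(z) = (1/(2·√z))·[[z+1, λ⁻¹(z−1)],[λ(z−1), z+1]], where √z is the principal square root. Then Φ^S(1) = I₂, det Φ^S(z) = 1 for all z ∈ Ω, and Φ^S is holomorphic on Ω with derivative (Φ^S)′(z) = Φ^S(z)·(1/z)·[[0, λ⁻¹/2],[λ/2, 0]] for every z ∈ Ω. (Thus Φ^S solves the Cauchy problem dΦ = Φ·ξ^S, Φ(1) = I₂, for the spherical Delaunay potential ξ^S = [[0, λ⁻¹/2],[λ/2, 0]]·dz/z.) -/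
/-!
Write `Φ^S(z) = (2√z)⁻¹ M(z)` with `M(z) = z A + B` affine in `z`. Then `det M(z) = 4z = (2√z)²`,
and `(2√z)⁻¹` has logarithmic derivative `-1/(2z)`, so `Φ' = Φ ξ^S` reduces to the matrix identity
`M(z) ξ₀ = z A - M(z)/2`, where `ξ^S = ξ₀ dz/z`.
-/

attribute [local instance] Matrix.linftyOpNormedAddCommGroup Matrix.linftyOpNormedRing
  Matrix.linftyOpNormedAlgebra

namespace Complex

theorem cpow_one_half_sq (z : ℂ) : (z ^ (1 / 2 : ℂ)) ^ 2 = z := by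
  rw [one_div]
  exact cpow_ofNat_inv_pow z 2

theorem hasDerivAt_cpow_one_half {z : ℂ} (hz : z ∈ slitPlane) :
    HasDerivAt (fun w : ℂ => w ^ (1 / 2 : ℂ)) (z ^ (1 / 2 : ℂ) / (2 * z)) z :=
  (hasStrictDerivAt_cpow_const hz).hasDerivAt.congr_deriv <| by
    rw [cpow_sub _ _ (slitPlane_ne_zero hz), cpow_one]
    ring

theorem hasDerivAt_one_div_two_mul_cpow_one_half {z : ℂ} (hz : z ∈ slitPlane) :
    HasDerivAt (fun w : ℂ => 1 / (2 * w ^ (1 / 2 : ℂ)))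
      (-(1 / (2 * z ^ (1 / 2 : ℂ))) / (2 * z)) z := by
  have hz0 : z ≠ 0 := slitPlane_ne_zero hz
  have hs0 : z ^ (1 / 2 : ℂ) ≠ 0 := by simp [cpow_eq_zero_iff, hz0]
  have h := ((hasDerivAt_cpow_one_half hz).const_mul 2).inv (mul_ne_zero two_ne_zero hs0)
  simp only [one_div] at h ⊢
  refine h.congr_deriv ?_
  field_simp

end Complex

namespace Delaunay

open Matrix

/-- `2√z · Φ^S(z)`. -/
noncomputable def numerator (lam z : ℂ) : Matrix (Fin 2) (Fin 2) ℂ :=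
  !![z + 1, lam⁻¹ * (z - 1); lam * (z - 1), z + 1]

theorem numerator_one (lam : ℂ) : numerator lam 1 = (2 : ℂ) • 1 := by
  ext i j
  fin_cases i <;> fin_cases j <;> norm_num [numerator]

theorem det_numerator {lam : ℂ} (hlam : lam ≠ 0) (z : ℂ) : (numerator lam z).det = 4 * z := by
  rw [numerator, det_fin_two_of]
  field_simp
  ring

theorem numerator_eq_smul_add (lam z : ℂ) :
    numerator lam z = z • !![1, lam⁻¹; lam, 1] + !![1, -lam⁻¹; -lam, 1] := by
  ext i j
  fin_cases i <;> fin_cases j <;> simp [numerator] <;> ring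

theorem hasDerivAt_numerator (lam z : ℂ) :
    HasDerivAt (numerator lam) !![1, lam⁻¹; lam, 1] z := by
  rw [show numerator lam = _ from funext (numerator_eq_smul_add lam)]
  exact (((hasDerivAt_id' z).smul_const _).add_const _).congr_deriv (one_smul ℂ _)

theorem numerator_mul_potential {lam : ℂ} (hlam : lam ≠ 0) (z : ℂ) :
    numerator lam z * !![0, lam⁻¹ / 2; lam / 2, 0] =
      z • !![1, lam⁻¹; lam, 1] - (1 / 2 : ℂ) • numerator lam z := by
  ext i j
  fin_cases i <;> fin_cases j <;> simp [numerator] <;> field_simp <;> ring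

end Delaunay

theorem stmt12 (lam : ℂ) (hlam : lam ≠ 0)
    (ΦS : ℂ → Matrix (Fin 2) (Fin 2) ℂ)
    (hΦS : ∀ z : ℂ, ΦS z = (1 / (2 * z ^ (1/2 : ℂ))) •
      !![z + 1, lam⁻¹ * (z - 1); lam * (z - 1), z + 1]) :
    ΦS 1 = 1 ∧ (∀ z ∈ Complex.slitPlane, (ΦS z).det = 1) ∧
    ∀ z ∈ Complex.slitPlane,
      HasDerivAt ΦS (ΦS z * ((1 / z) • !![0, lam⁻¹ / 2; lam / 2, 0])) z := by
  have hΦ : ΦS = fun z => (1 / (2 * z ^ (1 / 2 : ℂ))) • Delaunay.numerator lam z := funext hΦS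
  subst hΦ
  refine ⟨?_, fun z hz => ?_, fun z hz => ?_⟩
  · simp [Delaunay.numerator_one]
  · have hz0 : z ≠ 0 := Complex.slitPlane_ne_zero hz
    rw [Matrix.det_smul, Delaunay.det_numerator hlam, Fintype.card_fin, div_pow, mul_pow,
      Complex.cpow_one_half_sq]
    field_simp
    ring
  · have hz0 : z ≠ 0 := Complex.slitPlane_ne_zero hz
    refine ((Complex.hasDerivAt_one_div_two_mul_cpow_one_half hz).smul
      (Delaunay.hasDerivAt_numerator lam z)).congr_deriv ?_
    rw [Matrix.smul_mul, Matrix.mul_smul, Delaunay.numerator_mul_potential hlam]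
    match_scalars <;> field_simp
end

section
/- Let Ω = ℂ ∖ (−∞,0], z ∈ Ω with θ = arg z the principal argument, and λ ∈ ℂ with |λ| = 1. Define F^S(z,λ) = (1/(√2·√(1+|z|²)))·[[conj(z)+1, λ⁻¹(z−1)],[λ(1−conj(z)), z+1]]·[[e^{iθ/2}, 0],[0, e^{−iθ/2}]] and B^S(z,λ) = (1/(√(2|z|)·√(1+|z|²)))·[[2|z|, 0],[λ(|z|²−1), 1+|z|²]]. Then: (i) F^S(z,λ)·B^S(z,λ) = Φ^S(z,λ), where Φ^S(z,λ) = (1/(2·√z))·[[z+1, λ⁻¹(z−1)],[λ(z−1), z+1]] with √z the principal square root; (ii) F^S(z,λ) is unitary with determinant 1 (i.e. F^S(z,λ) ∈ SU(2)); (iii) the diagonal entries of B^S(z,λ) are positive real numbers and its (1,2) entry is 0. (This is the Iwasawa decomposition of Φ^S.) -/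
/-!
Write `E = exp (i arg z / 2)`, so that `√z = √|z| E`, `z = |z| E²` and `conj z = |z| E⁻²`.
The left factor of `F^S` has the shape `[[a, -conj b], [b, conj a]]` with
`|a|² + |b|² = |z + 1|² + |z - 1|² = 2 (1 + |z|²)`, so after the normalisation it lies in `SU(2)`,
as does `diag(E, conj E)`. The identity `F^S B^S = Φ^S` becomes a rational identity in `|z|`, `E`
and `λ` once `z` and `conj z` are expressed through `|z|` and `E`.
-/

open Complex Matrix ComplexConjugate

namespace Matrix

theorem mul_conjTranspose_su2Form (a b : ℂ) :
    !![a, -conj b; b, conj a] * (!![a, -conj b; b, conj a])ᴴ = (normSq a + normSq b : ℂ) • 1 := by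
  ext i j; fin_cases i <;> fin_cases j <;>
    simp [Matrix.mul_apply, mul_conj, mul_comm, add_comm]

theorem det_su2Form (a b : ℂ) : det !![a, -conj b; b, conj a] = normSq a + normSq b := by
  rw [det_fin_two_of, mul_conj, neg_mul, sub_neg_eq_add, mul_comm, mul_conj]

theorem smul_su2Form_mem_specialUnitaryGroup (a b : ℂ) (c : ℝ)
    (hc : c ^ 2 * (normSq a + normSq b) = 1) :
    (c : ℂ) • !![a, -conj b; b, conj a] ∈ specialUnitaryGroup (Fin 2) ℂ := by
  have hc' : (c : ℂ) ^ 2 * (normSq a + normSq b) = 1 := by exact_mod_cast hc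
  rw [mem_specialUnitaryGroup_iff, mem_unitaryGroup_iff, star_eq_conjTranspose, det_smul,
    det_su2Form, conjTranspose_smul, smul_mul_smul_comm, mul_conjTranspose_su2Form, smul_smul,
    Complex.star_def, conj_ofReal, Fintype.card_fin, ← sq, hc', one_smul]
  exact ⟨rfl, rfl⟩

theorem diagonal_mem_specialUnitaryGroup_of_norm_eq_one {u : ℂ} (hu : ‖u‖ = 1) :
    !![u, 0; 0, conj u] ∈ specialUnitaryGroup (Fin 2) ℂ := by
  simpa using smul_su2Form_mem_specialUnitaryGroup u 0 1 (by simp [normSq_eq_norm_sq, hu])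

end Matrix

namespace Complex

theorem cpow_one_half_eq_sqrt_norm_mul_exp_arg (z : ℂ) :
    z ^ (1 / 2 : ℂ) = √‖z‖ * exp (arg z * I / 2) := by
  rcases eq_or_ne z 0 with rfl | hz
  · simp
  rw [cpow_def_of_ne_zero hz, log, add_mul, exp_add, Real.sqrt_eq_rpow, Real.rpow_def_of_pos
    (norm_pos_iff.mpr hz), ofReal_exp]
  push_cast
  ring_nf

theorem norm_exp_arg_mul_I_div_two (z : ℂ) : ‖exp (arg z * I / 2)‖ = 1 := by
  rw [norm_exp]; simp

theorem norm_mul_exp_arg_mul_I_div_two_sq (z : ℂ) : ‖z‖ * exp (arg z * I / 2) ^ 2 = z := by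
  rw [← exp_nat_mul]
  push_cast
  rw [mul_div_cancel₀ _ two_ne_zero, norm_mul_exp_arg_mul_I]

theorem conj_mul_exp_arg_mul_I_div_two_sq (z : ℂ) : conj z * exp (arg z * I / 2) ^ 2 = ‖z‖ := by
  have h := congrArg conj (norm_mul_exp_arg_mul_I_div_two_sq z)
  rw [map_mul, map_pow, conj_ofReal, ← inv_eq_conj (norm_exp_arg_mul_I_div_two z)] at h
  rw [← h]
  field_simp

end Complex

theorem mul_diagonal_mul_lowerTriangular_eq_smul {K : Type*} [Field K] {z zc r E lam : K}
    (hE : E ≠ 0) (hlam : lam ≠ 0) (hz : r * E ^ 2 = z) (hzc : zc * E ^ 2 = r) :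
    !![zc + 1, lam⁻¹ * (z - 1); lam * (1 - zc), z + 1] * !![E, 0; 0, E⁻¹] *
        !![2 * r, 0; lam * (r ^ 2 - 1), 1 + r ^ 2] =
      ((1 + r ^ 2) * E⁻¹) • !![z + 1, lam⁻¹ * (z - 1); lam * (z - 1), z + 1] := by
  subst hz hzc
  ext i j; fin_cases i <;> fin_cases j <;> simp [Matrix.mul_apply] <;> field_simp <;> ring

-- `F^S`, `B^S` and `Φ^S`.
noncomputable section

def sphericalUnitaryFactor (z lam : ℂ) : Matrix (Fin 2) (Fin 2) ℂ :=
  ((√2 * √(1 + ‖z‖ ^ 2) : ℝ) : ℂ)⁻¹ •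
    (!![conj z + 1, lam⁻¹ * (z - 1); lam * (1 - conj z), z + 1] *
      !![exp (arg z * I / 2), 0; 0, exp (-(arg z * I / 2))])

def sphericalTriangularFactor (z lam : ℂ) : Matrix (Fin 2) (Fin 2) ℂ :=
  ((√(2 * ‖z‖) * √(1 + ‖z‖ ^ 2) : ℝ) : ℂ)⁻¹ •
    !![((2 * ‖z‖ : ℝ) : ℂ), 0; lam * ((‖z‖ ^ 2 - 1 : ℝ) : ℂ), ((1 + ‖z‖ ^ 2 : ℝ) : ℂ)]

def sphericalHolomorphicFrame (z lam : ℂ) : Matrix (Fin 2) (Fin 2) ℂ :=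
  (1 / (2 * z ^ (1 / 2 : ℂ))) • !![z + 1, lam⁻¹ * (z - 1); lam * (z - 1), z + 1]

end

theorem sphericalUnitaryFactor_mem_specialUnitaryGroup (z : ℂ) {lam : ℂ} (hlam : ‖lam‖ = 1) :
    sphericalUnitaryFactor z lam ∈ specialUnitaryGroup (Fin 2) ℂ := by
  have hM : !![conj z + 1, lam⁻¹ * (z - 1); lam * (1 - conj z), z + 1] =
      !![conj z + 1, -conj (lam * (1 - conj z)); lam * (1 - conj z), conj (conj z + 1)] := by
    simp only [map_mul, map_sub, map_one, map_add, conj_conj, ← inv_eq_conj hlam]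
    ring_nf
  have hnormSq : normSq (conj z + 1) + normSq (lam * (1 - conj z)) = 2 * (1 + ‖z‖ ^ 2) := by
    rw [normSq_mul, normSq_eq_norm_sq lam, hlam, ← normSq_eq_norm_sq]
    simp only [normSq_apply, add_re, add_im, sub_re, sub_im, conj_re, conj_im, one_re, one_im]
    ring
  rw [sphericalUnitaryFactor, Complex.exp_neg, inv_eq_conj (norm_exp_arg_mul_I_div_two z),
    ← smul_mul_assoc, hM, ← ofReal_inv]
  refine mul_mem (smul_su2Form_mem_specialUnitaryGroup _ _ _ ?_)
    (diagonal_mem_specialUnitaryGroup_of_norm_eq_one (norm_exp_arg_mul_I_div_two z))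
  rw [hnormSq, inv_pow, mul_pow, Real.sq_sqrt zero_le_two, Real.sq_sqrt (by positivity)]
  field_simp

theorem sphericalUnitaryFactor_mul_sphericalTriangularFactor {z lam : ℂ} (hz : z ≠ 0)
    (hlam : lam ≠ 0) :
    sphericalUnitaryFactor z lam * sphericalTriangularFactor z lam =
      sphericalHolomorphicFrame z lam := by
  have hr : (√(1 + ‖z‖ ^ 2) : ℂ) ^ 2 = 1 + ‖z‖ ^ 2 := by
    exact_mod_cast Real.sq_sqrt (by positivity)
  have h2 : (√2 : ℂ) ^ 2 = 2 := by exact_mod_cast Real.sq_sqrt zero_le_two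
  have hr0 : (√(1 + ‖z‖ ^ 2) : ℂ) ≠ 0 :=
    ofReal_ne_zero.mpr (Real.sqrt_pos.mpr (by positivity)).ne'
  have hs0 : (√‖z‖ : ℂ) ≠ 0 := ofReal_ne_zero.mpr (Real.sqrt_pos.mpr (norm_pos_iff.mpr hz)).ne'
  rw [sphericalUnitaryFactor, sphericalTriangularFactor, sphericalHolomorphicFrame,
    Complex.exp_neg, smul_mul_smul_comm]
  push_cast
  rw [mul_diagonal_mul_lowerTriangular_eq_smul (exp_ne_zero _) hlam
    (norm_mul_exp_arg_mul_I_div_two_sq z) (conj_mul_exp_arg_mul_I_div_two_sq z), smul_smul,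
    cpow_one_half_eq_sqrt_norm_mul_exp_arg, Real.sqrt_mul zero_le_two]
  congr 1
  push_cast
  field_simp
  rw [h2, hr]
  ring

theorem stmt13 (z lam : ℂ) (hz : z ∈ Complex.slitPlane) (hlam : ‖lam‖ = 1)
    (FS BS ΦS : Matrix (Fin 2) (Fin 2) ℂ)
    (hFS : FS = (((Real.sqrt 2 * Real.sqrt (1 + ‖z‖ ^ 2) : ℝ) : ℂ))⁻¹ •
        (!![starRingEnd ℂ z + 1, lam⁻¹ * (z - 1); lam * (1 - starRingEnd ℂ z), z + 1] *
          !![Complex.exp ((z.arg : ℂ) * Complex.I / 2), 0;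
             0, Complex.exp (-((z.arg : ℂ) * Complex.I / 2))]))
    (hBS : BS = (((Real.sqrt (2 * ‖z‖) * Real.sqrt (1 + ‖z‖ ^ 2) : ℝ) : ℂ))⁻¹ •
        !![((2 * ‖z‖ : ℝ) : ℂ), 0;
           lam * ((‖z‖ ^ 2 - 1 : ℝ) : ℂ), ((1 + ‖z‖ ^ 2 : ℝ) : ℂ)])
    (hΦS : ΦS = (1 / (2 * z ^ (1/2 : ℂ))) •
        !![z + 1, lam⁻¹ * (z - 1); lam * (z - 1), z + 1]) :
    FS * BS = ΦS ∧
    FS ∈ Matrix.unitaryGroup (Fin 2) ℂ ∧ FS.det = 1 ∧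
    (BS 0 0).im = 0 ∧ 0 < (BS 0 0).re ∧ (BS 1 1).im = 0 ∧ 0 < (BS 1 1).re ∧ BS 0 1 = 0 := by
  have hz0 : z ≠ 0 := slitPlane_ne_zero hz
  have hr : 0 < ‖z‖ := norm_pos_iff.mpr hz0
  have hlam0 : lam ≠ 0 := norm_ne_zero_iff.mp (by rw [hlam]; exact one_ne_zero)
  obtain rfl : FS = sphericalUnitaryFactor z lam := hFS
  obtain rfl : BS = sphericalTriangularFactor z lam := hBS
  obtain rfl : ΦS = sphericalHolomorphicFrame z lam := hΦS
  obtain ⟨hU, hdet⟩ := sphericalUnitaryFactor_mem_specialUnitaryGroup z hlam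
  refine ⟨sphericalUnitaryFactor_mul_sphericalTriangularFactor hz0 hlam0, hU, hdet, ?_⟩
  have hB00 : sphericalTriangularFactor z lam 0 0 =
      ((√(2 * ‖z‖) * √(1 + ‖z‖ ^ 2))⁻¹ * (2 * ‖z‖) : ℝ) := by simp [sphericalTriangularFactor]
  have hB11 : sphericalTriangularFactor z lam 1 1 =
      ((√(2 * ‖z‖) * √(1 + ‖z‖ ^ 2))⁻¹ * (1 + ‖z‖ ^ 2) : ℝ) := by simp [sphericalTriangularFactor]
  rw [hB00, hB11, ofReal_im, ofReal_re, ofReal_im, ofReal_re]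
  exact ⟨rfl, by positivity, rfl, by positivity, by simp [sphericalTriangularFactor]⟩
end

section
/- Let Ω = ℂ ∖ (−∞,0] and z ∈ Ω with θ = arg z the principal argument. For λ ∈ ℂ∖{0}, define F^S(z,λ) = (1/(√2·√(1+|z|²)))·[[conj(z)+1, λ⁻¹(z−1)],[λ(1−conj(z)), z+1]]·[[e^{iθ/2}, 0],[0, e^{−iθ/2}]]. Then the Sym–Bobenko matrix f^S(z) := −2i·(∂F^S/∂λ)(z,1)·F^S(z,1)⁻¹ equals (−i/(1+|z|²))·[[−|z−1|², 1−|z|² − z + conj(z)],[1−|z|² + z − conj(z), |z−1|²]]; that is, writing f^S(z) = −i·[[−x₃, x₁+i·x₂],[x₁−i·x₂, x₃]], one has (x₁,x₂,x₃) = ((1−|z|²)/(1+|z|²), −2·Im(z)/(1+|z|²), |z−1|²/(1+|z|²)). Moreover, the vector P(z) = Ψ(x₁,x₂,x₃) = (1−x₃, −x₂, −x₁) equals (1/(1+|z|²))·(2·Re(z), 2·Im(z), |z|²−1) ∈ ℝ³, it has Euclidean norm 1, and (P₁(z) + i·P₂(z))/(1 − P₃(z)) = z; i.e., after the rigid motion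 Ψ, the Sym–Bobenko immersion of the spherical frame is the inverse stereographic projection of z from the north pole (0,0,1) of the unit sphere. -/
/-!
The frame factors as `F^S(λ) = M(λ) · (c • E)` with `c = (√2 · √(1 + |z|²))⁻¹` and the diagonal
phase `E` independent of `λ`, so the Sym–Bobenko form `(∂_λ F^S)(F^S)⁻¹` at `λ = 1` is
`M'(1) M(1)⁻¹`; and `M(1)⁻¹` is the adjugate of `M(1)` divided by `det M(1) = 2(1 + |z|²)`.
Multiplying out gives `f^S`, whose coordinates, moved by `Ψ`, are the inverse stereographic
projection of `z`.
-/

open Complex ComplexConjugate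

attribute [local instance] Matrix.linftyOpNormedAddCommGroup Matrix.linftyOpNormedRing
  Matrix.linftyOpNormedAlgebra

noncomputable section

def phaseMatrix (t : ℂ) : Matrix (Fin 2) (Fin 2) ℂ := !![exp t, 0; 0, exp (-t)]

def sphericalFrameCore (z lam : ℂ) : Matrix (Fin 2) (Fin 2) ℂ :=
  !![conj z + 1, lam⁻¹ * (z - 1); lam * (1 - conj z), z + 1]

def inverseStereographic (z : ℂ) : Fin 3 → ℝ :=
  ![2 * z.re / (1 + ‖z‖ ^ 2), 2 * z.im / (1 + ‖z‖ ^ 2), (‖z‖ ^ 2 - 1) / (1 + ‖z‖ ^ 2)]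

end

theorem deriv_mul_const_mul_inv {𝕜 n : Type*} [NontriviallyNormedField 𝕜] [Fintype n]
    [DecidableEq n] {M : 𝕜 → Matrix n n 𝕜} {M' G : Matrix n n 𝕜} {x : 𝕜}
    (hM : HasDerivAt M M' x) (hG : IsUnit G.det) :
    deriv (fun l => M l * G) x * (M x * G)⁻¹ = M' * (M x)⁻¹ := by
  have hd : deriv (fun l => M l * G) x = M' * G := (hM.mul_const G).deriv
  rw [hd, Matrix.mul_inv_rev, Matrix.mul_assoc, ← Matrix.mul_assoc G,
    Matrix.mul_nonsing_inv G hG, Matrix.one_mul]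

theorem hasDerivAt_add_inv_smul_add_smul {𝕜 E : Type*} [NontriviallyNormedField 𝕜]
    [NormedAddCommGroup E] [NormedSpace 𝕜 E] (B C D : E) {x : 𝕜} (hx : x ≠ 0) :
    HasDerivAt (fun l : 𝕜 => B + l⁻¹ • C + l • D) (-(x ^ 2)⁻¹ • C + D) x := by
  have h := ((hasDerivAt_const x B).add ((hasDerivAt_inv hx).smul_const C)).add
    ((hasDerivAt_id x).smul_const D)
  rwa [zero_add, one_smul] at h

theorem det_phaseMatrix (t : ℂ) : (phaseMatrix t).det = 1 := by
  rw [phaseMatrix, Matrix.det_fin_two_of, ← exp_add, add_neg_cancel, exp_zero, mul_zero,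
    sub_zero]

theorem hasDerivAt_sphericalFrameCore (z : ℂ) {lam : ℂ} (hlam : lam ≠ 0) :
    HasDerivAt (sphericalFrameCore z) !![0, -(lam ^ 2)⁻¹ * (z - 1); 1 - conj z, 0] lam := by
  have hsplit : sphericalFrameCore z = fun l => !![conj z + 1, 0; 0, z + 1] +
      l⁻¹ • !![0, z - 1; 0, 0] + l • !![0, 0; 1 - conj z, 0] := by
    funext l
    ext i j
    fin_cases i <;> fin_cases j <;> simp [sphericalFrameCore]
  have hderiv : !![0, -(lam ^ 2)⁻¹ * (z - 1); 1 - conj z, 0] =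
      -(lam ^ 2)⁻¹ • !![0, z - 1; 0, 0] + !![0, 0; 1 - conj z, 0] := by
    ext i j
    fin_cases i <;> fin_cases j <;> simp
  rw [hsplit, hderiv]
  exact hasDerivAt_add_inv_smul_add_smul _ _ _ hlam

theorem det_sphericalFrameCore (z : ℂ) {lam : ℂ} (hlam : lam ≠ 0) :
    (sphericalFrameCore z lam).det = 2 * (1 + normSq z) := by
  rw [sphericalFrameCore, Matrix.det_fin_two_of, normSq_eq_conj_mul_self]
  field_simp
  ring

theorem symBobenko_sphericalFrameCore (z : ℂ) :
    (-2 * I) • (!![0, -((1 : ℂ) ^ 2)⁻¹ * (z - 1); 1 - conj z, 0] * (sphericalFrameCore z 1)⁻¹) =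
      (-I / ((1 + ‖z‖ ^ 2 : ℝ) : ℂ)) •
        !![-((‖z - 1‖ ^ 2 : ℝ) : ℂ), ((1 - ‖z‖ ^ 2 : ℝ) : ℂ) - z + conj z;
          ((1 - ‖z‖ ^ 2 : ℝ) : ℂ) + z - conj z, ((‖z - 1‖ ^ 2 : ℝ) : ℂ)] := by
  have hd : (1 + conj z * z : ℂ) ≠ 0 := by
    rw [← normSq_eq_conj_mul_self]
    exact_mod_cast (by linarith [normSq_nonneg z] : (1 + normSq z : ℝ) ≠ 0)
  rw [Matrix.inv_def, det_sphericalFrameCore z one_ne_zero, Ring.inverse_eq_inv',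
    sphericalFrameCore, Matrix.adjugate_fin_two_of, Matrix.mul_smul, smul_smul, Complex.sq_norm,
    Complex.sq_norm]
  simp only [ofReal_sub, ofReal_add, ofReal_one, normSq_eq_conj_mul_self, map_sub, map_one]
  ext i j
  fin_cases i <;> fin_cases j <;> simp <;> field_simp <;> ring

theorem smul_symBobenko_eq_su2 (z : ℂ) {x₁ x₂ x₃ : ℝ}
    (hx₁ : x₁ = (1 - ‖z‖ ^ 2) / (1 + ‖z‖ ^ 2))
    (hx₂ : x₂ = -2 * z.im / (1 + ‖z‖ ^ 2))
    (hx₃ : x₃ = ‖z - 1‖ ^ 2 / (1 + ‖z‖ ^ 2)) :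
    (-I / ((1 + ‖z‖ ^ 2 : ℝ) : ℂ)) •
        !![-((‖z - 1‖ ^ 2 : ℝ) : ℂ), ((1 - ‖z‖ ^ 2 : ℝ) : ℂ) - z + conj z;
          ((1 - ‖z‖ ^ 2 : ℝ) : ℂ) + z - conj z, ((‖z - 1‖ ^ 2 : ℝ) : ℂ)] =
      (-I) • !![-(x₃ : ℂ), (x₁ : ℂ) + (x₂ : ℂ) * I; (x₁ : ℂ) - (x₂ : ℂ) * I, (x₃ : ℂ)] := by
  have hd : (1 + ‖z‖ ^ 2 : ℂ) ≠ 0 := by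
    exact_mod_cast (by positivity : (1 + ‖z‖ ^ 2 : ℝ) ≠ 0)
  have hconj : conj z = z - 2 * z.im * I := by
    rw [← ofReal_ofNat, ← ofReal_mul, ← sub_conj, sub_sub_cancel]
  subst hx₁ hx₂ hx₃
  rw [hconj]
  ext i j
  fin_cases i <;> fin_cases j <;> simp <;> field_simp <;> ring

theorem sq_norm_sub_one (z : ℂ) : ‖z - 1‖ ^ 2 = ‖z‖ ^ 2 - 2 * z.re + 1 := by
  rw [Complex.sq_norm, Complex.sq_norm, normSq_apply, normSq_apply]
  simp only [sub_re, one_re, sub_im, one_im]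
  ring

theorem inverseStereographic_eq (z : ℂ) {x₁ x₂ x₃ : ℝ}
    (hx₁ : x₁ = (1 - ‖z‖ ^ 2) / (1 + ‖z‖ ^ 2))
    (hx₂ : x₂ = -2 * z.im / (1 + ‖z‖ ^ 2))
    (hx₃ : x₃ = ‖z - 1‖ ^ 2 / (1 + ‖z‖ ^ 2)) :
    ![1 - x₃, -x₂, -x₁] = inverseStereographic z := by
  have hd : (1 + ‖z‖ ^ 2 : ℝ) ≠ 0 := by positivity
  subst hx₁ hx₂ hx₃
  rw [sq_norm_sub_one]
  ext i
  fin_cases i <;> simp [inverseStereographic] <;> field_simp <;> ring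

theorem inverseStereographic_sq_sum (z : ℂ) :
    inverseStereographic z 0 ^ 2 + inverseStereographic z 1 ^ 2 +
      inverseStereographic z 2 ^ 2 = 1 := by
  have hd : (1 + ‖z‖ ^ 2 : ℝ) ≠ 0 := by positivity
  have hnorm : ‖z‖ ^ 2 = z.re ^ 2 + z.im ^ 2 := by rw [Complex.sq_norm, normSq_apply]; ring
  simp only [inverseStereographic, Matrix.cons_val]
  field_simp
  rw [hnorm]
  ring

theorem stereographic_inverseStereographic (z : ℂ) :
    ((inverseStereographic z 0 : ℂ) + (inverseStereographic z 1 : ℂ) * I) /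
      (1 - (inverseStereographic z 2 : ℂ)) = z := by
  have hd : (1 + ‖z‖ ^ 2 : ℂ) ≠ 0 := by
    exact_mod_cast (by positivity : (1 + ‖z‖ ^ 2 : ℝ) ≠ 0)
  simp only [inverseStereographic, Matrix.cons_val]
  push_cast
  field_simp
  rw [re_add_im]
  ring

theorem stmt14_general (z : ℂ)
    (FS : ℂ → Matrix (Fin 2) (Fin 2) ℂ)
    (hFS : ∀ lam : ℂ, FS lam =
      (((Real.sqrt 2 * Real.sqrt (1 + ‖z‖ ^ 2) : ℝ) : ℂ))⁻¹ •
        (!![starRingEnd ℂ z + 1, lam⁻¹ * (z - 1); lam * (1 - starRingEnd ℂ z), z + 1] *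
          !![Complex.exp ((z.arg : ℂ) * Complex.I / 2), 0;
             0, Complex.exp (-((z.arg : ℂ) * Complex.I / 2))]))
    (fS : Matrix (Fin 2) (Fin 2) ℂ)
    (hfS : fS = (-2 * Complex.I) • (deriv FS 1 * (FS 1)⁻¹))
    (x₁ x₂ x₃ : ℝ)
    (hx₁ : x₁ = (1 - ‖z‖ ^ 2) / (1 + ‖z‖ ^ 2))
    (hx₂ : x₂ = -2 * z.im / (1 + ‖z‖ ^ 2))
    (hx₃ : x₃ = ‖z - 1‖ ^ 2 / (1 + ‖z‖ ^ 2))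
    (P : Fin 3 → ℝ) (hP : P = ![1 - x₃, -x₂, -x₁]) :
    fS = (-Complex.I / ((1 + ‖z‖ ^ 2 : ℝ) : ℂ)) •
        !![-((‖z - 1‖ ^ 2 : ℝ) : ℂ),
            ((1 - ‖z‖ ^ 2 : ℝ) : ℂ) - z + starRingEnd ℂ z;
          ((1 - ‖z‖ ^ 2 : ℝ) : ℂ) + z - starRingEnd ℂ z,
            ((‖z - 1‖ ^ 2 : ℝ) : ℂ)] ∧
    fS = (-Complex.I) • !![-(x₃ : ℂ), (x₁ : ℂ) + (x₂ : ℂ) * Complex.I;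
        (x₁ : ℂ) - (x₂ : ℂ) * Complex.I, (x₃ : ℂ)] ∧
    P = ![2 * z.re / (1 + ‖z‖ ^ 2), 2 * z.im / (1 + ‖z‖ ^ 2),
        (‖z‖ ^ 2 - 1) / (1 + ‖z‖ ^ 2)] ∧
    P 0 ^ 2 + P 1 ^ 2 + P 2 ^ 2 = 1 ∧
    (((P 0 : ℝ) : ℂ) + ((P 1 : ℝ) : ℂ) * Complex.I) / (1 - ((P 2 : ℝ) : ℂ)) = z := by
  set c : ℂ := ((Real.sqrt 2 * Real.sqrt (1 + ‖z‖ ^ 2) : ℝ) : ℂ)⁻¹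
  set G := c • phaseMatrix (z.arg * I / 2)
  have hc : c ≠ 0 := inv_ne_zero (ofReal_ne_zero.mpr (by positivity))
  have hG : IsUnit G.det := by
    rw [Matrix.det_smul, det_phaseMatrix, mul_one]
    exact (isUnit_iff_ne_zero.mpr hc).pow _
  have hFS' : FS = fun lam => sphericalFrameCore z lam * G := by
    funext lam
    rw [hFS, ← Matrix.mul_smul]
    rfl
  have hsym : fS = (-I / ((1 + ‖z‖ ^ 2 : ℝ) : ℂ)) •
      !![-((‖z - 1‖ ^ 2 : ℝ) : ℂ), ((1 - ‖z‖ ^ 2 : ℝ) : ℂ) - z + conj z;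
        ((1 - ‖z‖ ^ 2 : ℝ) : ℂ) + z - conj z, ((‖z - 1‖ ^ 2 : ℝ) : ℂ)] := by
    rw [hfS, hFS', deriv_mul_const_mul_inv (hasDerivAt_sphericalFrameCore z one_ne_zero) hG]
    exact symBobenko_sphericalFrameCore z
  have hP' : P = inverseStereographic z := hP.trans (inverseStereographic_eq z hx₁ hx₂ hx₃)
  refine ⟨hsym, hsym.trans (smul_symBobenko_eq_su2 z hx₁ hx₂ hx₃), hP', ?_, ?_⟩ <;> rw [hP']
  · exact inverseStereographic_sq_sum z
  · exact stereographic_inverseStereographic z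

theorem stmt14 (z : ℂ) (hz : z ∈ Complex.slitPlane)
    (FS : ℂ → Matrix (Fin 2) (Fin 2) ℂ)
    (hFS : ∀ lam : ℂ, FS lam =
      (((Real.sqrt 2 * Real.sqrt (1 + ‖z‖ ^ 2) : ℝ) : ℂ))⁻¹ •
        (!![starRingEnd ℂ z + 1, lam⁻¹ * (z - 1); lam * (1 - starRingEnd ℂ z), z + 1] *
          !![Complex.exp ((z.arg : ℂ) * Complex.I / 2), 0;
             0, Complex.exp (-((z.arg : ℂ) * Complex.I / 2))]))
    (fS : Matrix (Fin 2) (Fin 2) ℂ)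
    (hfS : fS = (-2 * Complex.I) • (deriv FS 1 * (FS 1)⁻¹))
    (x₁ x₂ x₃ : ℝ)
    (hx₁ : x₁ = (1 - ‖z‖ ^ 2) / (1 + ‖z‖ ^ 2))
    (hx₂ : x₂ = -2 * z.im / (1 + ‖z‖ ^ 2))
    (hx₃ : x₃ = ‖z - 1‖ ^ 2 / (1 + ‖z‖ ^ 2))
    (P : Fin 3 → ℝ) (hP : P = ![1 - x₃, -x₂, -x₁]) :
    fS = (-Complex.I / ((1 + ‖z‖ ^ 2 : ℝ) : ℂ)) •
        !![-((‖z - 1‖ ^ 2 : ℝ) : ℂ),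
            ((1 - ‖z‖ ^ 2 : ℝ) : ℂ) - z + starRingEnd ℂ z;
          ((1 - ‖z‖ ^ 2 : ℝ) : ℂ) + z - starRingEnd ℂ z,
            ((‖z - 1‖ ^ 2 : ℝ) : ℂ)] ∧
    fS = (-Complex.I) • !![-(x₃ : ℂ), (x₁ : ℂ) + (x₂ : ℂ) * Complex.I;
        (x₁ : ℂ) - (x₂ : ℂ) * Complex.I, (x₃ : ℂ)] ∧
    P = ![2 * z.re / (1 + ‖z‖ ^ 2), 2 * z.im / (1 + ‖z‖ ^ 2),
        (‖z‖ ^ 2 - 1) / (1 + ‖z‖ ^ 2)] ∧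
    P 0 ^ 2 + P 1 ^ 2 + P 2 ^ 2 = 1 ∧
    (((P 0 : ℝ) : ℂ) + ((P 1 : ℝ) : ℂ) * Complex.I) / (1 - ((P 2 : ℝ) : ℂ)) = z :=
  stmt14_general z FS hFS fS hfS x₁ x₂ x₃ hx₁ hx₂ hx₃ P hP
end

section
/- Let Ω = ℂ ∖ (−∞,0] and λ ∈ ℂ∖{0}. Define on Ω the matrix-valued functions ξ^S(z) = (1/z)·[[0, λ⁻¹/2],[λ/2, 0]] and G^S(z) = [[(1+z)/√z, 0],[λ(1−z)/√z, √z/(1+z)]], with √z the principal square root. Then for every z ∈ Ω, G^S(z)⁻¹·ξ^S(z)·G^S(z) + G^S(z)⁻¹·(G^S)′(z) = (1/(2(z+1)²))·[[0, λ⁻¹],[0, 0]], where (G^S)′ is the entrywise complex derivative. In particular the gauged potential ξ^S·G^S extends holomorphically across z = 0, so the pole of the spherical Delaunay potential at 0 is an apparent singularity. -/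
/-!
`G^S` is lower triangular with determinant `1`, so its inverse is read off directly and the gauge
`G⁻¹ ξ G + G⁻¹ G'` of an off-diagonal potential by a lower-triangular matrix is given entrywise by
a short closed formula. Writing `s = √z`, so that `z = s²`, every entry of `G^S` and of its
derivative is a rational function of `s`, and the four entries of the gauged potential reduce to
identities between rational functions of `s`.
-/

attribute [local instance] Matrix.linftyOpNormedAddCommGroup Matrix.linftyOpNormedRing
  Matrix.linftyOpNormedAlgebra

open Complex

namespace Matrix

theorem inv_lowerTriangular_fin_two {K : Type*} [Field K] {a c d : K} (had : a * d = 1) :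
    !![a, 0; c, d]⁻¹ = !![d, 0; -c, a] := by
  refine inv_eq_left_inv ?_
  rw [mul_fin_two, mul_comm d a, had, one_fin_two]
  simp [mul_comm]

theorem gauge_lowerTriangular_offDiagonal {K : Type*} [Field K] {a c d : K} (had : a * d = 1)
    (a' c' d' p q : K) :
    !![a, 0; c, d]⁻¹ * !![0, p; q, 0] * !![a, 0; c, d] + !![a, 0; c, d]⁻¹ * !![a', 0; c', d']
      = !![p * c * d + d * a', p * d ^ 2;
          q * a ^ 2 - p * c ^ 2 - c * a' + a * c', -(p * c * d) + a * d'] := by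
  rw [inv_lowerTriangular_fin_two had]
  ext i j
  fin_cases i <;> fin_cases j <;>
    simp only [mul_fin_two, add_apply, of_apply, cons_val', cons_val_zero, cons_val_one,
      cons_val_fin_one, Fin.zero_eta, Fin.mk_one, Fin.isValue] <;> ring

theorem hasDerivAt_fin_two {𝕜 : Type*} [NontriviallyNormedField 𝕜] {a b c d : 𝕜 → 𝕜}
    {a' b' c' d' x : 𝕜} (ha : HasDerivAt a a' x) (hb : HasDerivAt b b' x)
    (hc : HasDerivAt c c' x) (hd : HasDerivAt d d' x) :
    HasDerivAt (fun w ↦ !![a w, b w; c w, d w]) !![a', b'; c', d'] x := by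
  refine hasDerivAt_pi.2 fun i ↦ hasDerivAt_pi.2 fun j ↦ ?_
  fin_cases i <;> fin_cases j <;> assumption

end Matrix

namespace Complex

theorem hasDerivAt_cpow_half {z : ℂ} (hz : z ∈ slitPlane) :
    HasDerivAt (· ^ (1 / 2 : ℂ)) (1 / (2 * z ^ (1 / 2 : ℂ))) z := by
  convert (hasDerivAt_id' z).cpow_const (c := 1 / 2) hz using 1
  rw [show (1 / 2 : ℂ) - 1 = -(1 / 2) by norm_num, cpow_neg]
  ring

theorem one_add_ne_zero_of_mem_slitPlane {z : ℂ} (hz : z ∈ slitPlane) : 1 + z ≠ 0 := by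
  intro h
  rw [show z = -1 by linear_combination h, mem_slitPlane_iff] at hz
  norm_num at hz

end Complex

theorem stmt15 (lam : ℂ) (hlam : lam ≠ 0)
    (ξS GS : ℂ → Matrix (Fin 2) (Fin 2) ℂ)
    (hξS : ∀ z : ℂ, ξS z = (1 / z) • !![0, lam⁻¹ / 2; lam / 2, 0])
    (hGS : ∀ z : ℂ, GS z = !![(1 + z) / z ^ (1/2 : ℂ), 0;
        lam * (1 - z) / z ^ (1/2 : ℂ), z ^ (1/2 : ℂ) / (1 + z)]) :
    ∀ z ∈ Complex.slitPlane,
      (GS z)⁻¹ * ξS z * GS z + (GS z)⁻¹ * deriv GS z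
        = (1 / (2 * (z + 1) ^ 2)) • !![0, lam⁻¹; 0, 0] := by
  intro z hz
  have hs := hasDerivAt_cpow_half hz
  have hsq : (z ^ (1 / 2 : ℂ)) ^ 2 = z := by simp [one_div]
  have hs0 : z ^ (1 / 2 : ℂ) ≠ 0 := by simpa [cpow_eq_zero_iff] using slitPlane_ne_zero hz
  have hz1 := one_add_ne_zero_of_mem_slitPlane hz
  have hderiv := (Matrix.hasDerivAt_fin_two
    (((hasDerivAt_id' z).const_add 1).fun_div hs hs0) (hasDerivAt_const z 0)
    ((((hasDerivAt_id' z).const_sub 1).const_mul lam).fun_div hs hs0)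
    (hs.fun_div ((hasDerivAt_id' z).const_add 1) hz1)).deriv
  rw [← funext hGS] at hderiv
  have hdet : (1 + z) / z ^ (1 / 2 : ℂ) * (z ^ (1 / 2 : ℂ) / (1 + z)) = 1 := by field_simp
  -- `hderiv` is about `deriv` for the normed structure on matrices; `show` matches it with the
  -- statement's `deriv` up to definitional unfolding, which `rw` alone does not do.
  rw [hξS z, hGS z, add_comm z 1, show deriv GS z = _ from hderiv]
  simp only [Matrix.smul_of, Matrix.smul_cons, smul_eq_mul, mul_zero, Matrix.smul_empty]
  rw [Matrix.gauge_lowerTriangular_offDiagonal hdet]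
  generalize z ^ (1 / 2 : ℂ) = s at *
  subst hsq
  ext i j
  fin_cases i <;> fin_cases j <;>
    simp only [Matrix.of_apply, Matrix.cons_val', Matrix.cons_val_zero, Matrix.cons_val_one,
      Matrix.cons_val_fin_one, Fin.zero_eta, Fin.mk_one, Fin.isValue] <;> field_simp <;> ring
end

section
/- Let Ω = ℂ ∖ (−∞,0] be the slit plane. Define Φ^C : Ω → M₂(ℂ) by Φ^C(z) = (1/(2·√z))·[[z+1, z−1],[z−1, z+1]], where √z is the principal square root. Then Φ^C(1) = I₂, det Φ^C(z) = 1 for all z ∈ Ω, and Φ^C is holomorphic on Ω with derivative (Φ^C)′(z) = Φ^C(z)·(1/z)·[[0, 1/2],[1/2, 0]] for every z ∈ Ω. (Thus Φ^C solves the Cauchy problem dΦ = Φ·ξ^C, Φ(1) = I₂, for the catenoidal Delaunay potential ξ^C = [[0, 1/2],[1/2, 0]]·dz/z.) -/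
/-! Writing `M(z) = [[z+1, z-1], [z-1, z+1]]` and `c(z) = 1/(2√z)`, we have `Φ^C = c • M` with
`det M = 4z = 1/c²` and `c' = -c/(2z)`. The differential equation then reduces to the matrix
identity `M(z)·[[1,1],[1,1]] = 2z·[[1,1],[1,1]] = 2z·M'(z)`. -/

attribute [local instance] Matrix.linftyOpNormedAddCommGroup Matrix.linftyOpNormedRing
  Matrix.linftyOpNormedAlgebra

open Complex Matrix

lemma cpow_half_sq (z : ℂ) : (z ^ (1 / 2 : ℂ)) ^ 2 = z := by
  simp [cpow_ofNat_inv_pow z 2]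

lemma hasDerivAt_one_div_two_mul_cpow_half {z : ℂ} (hz : z ∈ slitPlane) :
    HasDerivAt (fun w : ℂ => 1 / (2 * w ^ (1 / 2 : ℂ)))
      (-(1 / (2 * z)) * (1 / (2 * z ^ (1 / 2 : ℂ)))) z := by
  have hz0 : z ≠ 0 := slitPlane_ne_zero hz
  have hs : z ^ (1 / 2 : ℂ) ≠ 0 := (cpow_ne_zero_iff_of_exponent_ne_zero (by norm_num)).2 hz0
  have hinv := ((hasStrictDerivAt_cpow_const (c := 1 / 2) hz).hasDerivAt.const_mul 2).inv
    (mul_ne_zero two_ne_zero hs)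
  simp only [one_div] at hinv ⊢
  refine hinv.congr_deriv ?_
  rw [cpow_sub _ _ hz0, cpow_one]
  field_simp

lemma catenoid_matrix_eq (z : ℂ) :
    !![z + 1, z - 1; z - 1, z + 1] = z • !![1, 1; 1, 1] + !![1, -1; -1, 1] := by
  ext i j
  fin_cases i <;> fin_cases j <;> simp <;> ring

lemma hasDerivAt_catenoid_matrix (z : ℂ) :
    HasDerivAt (fun w : ℂ => !![w + 1, w - 1; w - 1, w + 1]) !![1, 1; 1, 1] z := by
  rw [funext catenoid_matrix_eq]
  exact (((hasDerivAt_id' z).smul_const _).add_const _).congr_deriv (one_smul _ _)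

lemma det_catenoid_matrix (z : ℂ) : det !![z + 1, z - 1; z - 1, z + 1] = 4 * z := by
  rw [det_fin_two_of]
  ring

lemma catenoid_matrix_mul {z : ℂ} (hz : z ≠ 0) :
    !![z + 1, z - 1; z - 1, z + 1] * ((1 / z) • !![0, (1 : ℂ) / 2; 1 / 2, 0]) =
      !![1, 1; 1, 1] - (1 / (2 * z)) • !![z + 1, z - 1; z - 1, z + 1] := by
  ext i j
  fin_cases i <;> fin_cases j <;> simp [mul_apply, Fin.sum_univ_two] <;> field_simp <;> ring

theorem stmt16 (ΦC : ℂ → Matrix (Fin 2) (Fin 2) ℂ)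
    (hΦC : ∀ z : ℂ, ΦC z = (1 / (2 * z ^ (1/2 : ℂ))) •
      !![z + 1, z - 1; z - 1, z + 1]) :
    ΦC 1 = 1 ∧ (∀ z ∈ Complex.slitPlane, (ΦC z).det = 1) ∧
    ∀ z ∈ Complex.slitPlane,
      HasDerivAt ΦC (ΦC z * ((1 / z) • !![0, (1:ℂ) / 2; 1 / 2, 0])) z := by
  obtain rfl := funext hΦC
  refine ⟨?_, fun z hz => ?_, fun z hz => ?_⟩
  · ext i j
    fin_cases i <;> fin_cases j <;> norm_num
  · have hz0 : z ≠ 0 := slitPlane_ne_zero hz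
    rw [det_smul, det_catenoid_matrix, Fintype.card_fin, div_pow, mul_pow, cpow_half_sq]
    field_simp
    ring
  · refine ((hasDerivAt_one_div_two_mul_cpow_half hz).smul
      (hasDerivAt_catenoid_matrix z)).congr_deriv ?_
    rw [smul_mul_assoc, catenoid_matrix_mul (slitPlane_ne_zero hz), smul_sub, smul_smul]
    module
end
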